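/- arXiv:1204.5884 — 4 statements merged into one kernel-verified Lean document; each statement's English description precedes it below -/
import Mathlib

section
/- Combining the bounds S(ρ_K|ρ_{C^n}) ≥ H(K) − n l R_L and S(ρ_K|ρ_{C^n}) ≤ log(S̄_n + 1), the expected number of spurious keys satisfies S̄_n ≥ 2^{H(K)} / 2^{n l R_L} − 1; hence if S̄_n = 0 then n ≥ H(K)/(l R_L). -/
/-- combining `S(ρ_K|ρ_{C^n}) ≥ H(K) − n l R_L` and
`S(ρ_K|ρ_{C^n}) ≤ log₂(S̄_n + 1)`, one gets `S̄_n ≥ 2^{H(K)}/2^{n l R_L} − 1`;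
hence if `S̄_n = 0` then `n ≥ H(K)/(l R_L)`. -/
theorem stmt4 (HK n l RL Sbar cond : ℝ)
    (hl : 0 < l) (hR : 0 < RL) (hSnn : 0 ≤ Sbar)
    (h1 : HK - n * l * RL ≤ cond)
    (h2 : cond ≤ Real.logb 2 (Sbar + 1)) :
    Sbar ≥ (2 : ℝ) ^ HK / (2 : ℝ) ^ (n * l * RL) - 1 ∧
      (Sbar = 0 → n ≥ HK / (l * RL)) := by
  have hkey : HK - n * l * RL ≤ Real.logb 2 (Sbar + 1) := h1.trans h2
  have hpos : (0 : ℝ) < Sbar + 1 := by linarith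
  have hrw : (2 : ℝ) ^ (HK - n * l * RL) ≤ Sbar + 1 := by
    have := (Real.rpow_le_rpow_left_iff (x := (2:ℝ)) (by norm_num)).mpr hkey
    calc (2 : ℝ) ^ (HK - n * l * RL) ≤ (2 : ℝ) ^ Real.logb 2 (Sbar + 1) := this
      _ = Sbar + 1 := Real.rpow_logb (by norm_num) (by norm_num) hpos
  constructor
  · have : (2 : ℝ) ^ (HK - n * l * RL) = (2 : ℝ) ^ HK / (2 : ℝ) ^ (n * l * RL) :=
      Real.rpow_sub (by norm_num) _ _
    linarith [this ▸ hrw]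
  · intro hS
    subst hS
    have : (2 : ℝ) ^ (HK - n * l * RL) ≤ (2 : ℝ) ^ (0 : ℝ) := by
      simpa [Real.rpow_zero] using hrw
    have h0 : HK - n * l * RL ≤ 0 :=
      (Real.rpow_le_rpow_left_iff (x := (2:ℝ)) (by norm_num)).mp this
    rw [ge_iff_le, div_le_iff₀ (by positivity)]
    nlinarith
end

section
/- In the bitwise BB84-style encryption (protocol A), if a candidate key group differs from the true key group in at least one position, then decrypting one encrypted plaintext bit with that candidate key group yields 0 or 1 each with probability exactly 1/2. -/
lemma flip_sum {l : ℕ} (k k' : Fin l → ZMod 2) (j : Fin l) (hj : ¬ k j = k' j)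
    (b c : Fin l → ZMod 2) :
    (∑ i, if k i = k' i then b i else Function.update c j (c j + 1) i)
      = (∑ i, if k i = k' i then b i else c i) + 1 := by
  rw [← Finset.sum_erase_add _ _ (Finset.mem_univ j),
      ← Finset.sum_erase_add _ _ (Finset.mem_univ j)]
  have h1 : ∀ i ∈ Finset.univ.erase j,
      (if k i = k' i then b i else Function.update c j (c j + 1) i)
        = (if k i = k' i then b i else c i) := by
    intro i hi
    rw [Function.update_of_ne (Finset.ne_of_mem_erase hi)]
  rw [Finset.sum_congr rfl h1, if_neg hj, if_neg hj, Function.update_self, add_assoc]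

/-- in protocol A, encrypting a bit `x` with key `k ∈ {0,1}^l` uses a
uniformly random `b` with `⊕ᵢ bᵢ = x`.  Decrypting with a candidate key `k' ≠ k`
measures each qubit: positions where `k'ᵢ = kᵢ` yield `bᵢ`, while positions where
they differ yield an independent uniform random bit `cᵢ`.  The decrypted bit (the
XOR of all outcomes) is then 0 or 1 each with probability exactly 1/2: among all
pairs `(b, c)` with `∑ᵢ bᵢ = x`, exactly as many give outcome 0 as give outcome 1. -/
theorem stmt10 (l : ℕ) (x : ZMod 2) (k k' : Fin l → ZMod 2) (hne : k ≠ k') :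
    ((Finset.univ : Finset ((Fin l → ZMod 2) × (Fin l → ZMod 2))).filter
        (fun bc => (∑ i, bc.1 i) = x ∧
          (∑ i, if k i = k' i then bc.1 i else bc.2 i) = 0)).card
      = ((Finset.univ : Finset ((Fin l → ZMod 2) × (Fin l → ZMod 2))).filter
        (fun bc => (∑ i, bc.1 i) = x ∧
          (∑ i, if k i = k' i then bc.1 i else bc.2 i) = 1)).card := by
  obtain ⟨j, hj⟩ := Function.ne_iff.mp hne
  have hz : ∀ a : ZMod 2, a + 1 = 0 ↔ a = 1 := by decide
  have hz' : ∀ a : ZMod 2, a + 1 = 1 ↔ a = 0 := by decide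
  have hupd : ∀ c : Fin l → ZMod 2,
      Function.update (Function.update c j (c j + 1)) j
        (Function.update c j (c j + 1) j + 1) = c := by
    intro c
    funext i
    by_cases hij : i = j
    · subst hij; simp only [Function.update_self]; exact (by decide : ∀ a : ZMod 2, a + 1 + 1 = a) _
    · simp [Function.update_of_ne hij]
  apply Finset.card_bij' (fun bc _ => (bc.1, Function.update bc.2 j (bc.2 j + 1)))
    (fun bc _ => (bc.1, Function.update bc.2 j (bc.2 j + 1)))
  · intro bc _
    exact Prod.ext rfl (hupd bc.2)
  · intro bc _
    exact Prod.ext rfl (hupd bc.2)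
  · intro bc hbc
    simp only [Finset.mem_filter, Finset.mem_univ, true_and] at hbc ⊢
    exact ⟨hbc.1, by rw [flip_sum k k' j hj, hz']; exact hbc.2⟩
  · intro bc hbc
    simp only [Finset.mem_filter, Finset.mem_univ, true_and] at hbc ⊢
    exact ⟨hbc.1, by rw [flip_sum k k' j hj, hz]; exact hbc.2⟩
end

section
/- Given detection probability p_e = 1 − 2^{−m₀ n} for m₀ < 2t+1 and p_e ≥ 1 − (1 − 2^{2t−m₀})^n for 2t+1 ≤ m₀ ≤ m, the minimal n guaranteeing p_e ≥ p₀ for all m₀ ∈ {1,…,m} is n₀ = ln(1−p₀)/ln(1 − 2^{2t−m}), i.e., the maximum over m₀ of {−ln(1−p₀)/(m₀ ln 2), ln(1−p₀)/ln(1 − 2^{2t−m₀})} is attained at m₀ = m. -/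
/-- with detection probabilities `p_e = 1 − 2^{−m₀ n}` for
`m₀ < 2t+1` and `p_e ≥ 1 − (1 − 2^{2t−m₀})^n` for `2t+1 ≤ m₀ ≤ m`, the required
number of ciphertexts to reach security level `p₀` is
`g(m₀) = −ln(1−p₀)/(m₀ ln 2)` in the first case and
`g(m₀) = ln(1−p₀)/ln(1 − 2^{2t−m₀})` in the second; the maximum of `g` over
`1 ≤ m₀ ≤ m` is attained at `m₀ = m`, giving `n₀ = ln(1−p₀)/ln(1 − 2^{2t−m})`. -/
theorem stmt13 (p₀ : ℝ) (hp₀ : 0 < p₀) (hp₁ : p₀ < 1) (t m : ℕ) (hm : 2 * t + 1 ≤ m)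
    (g : ℕ → ℝ)
    (hg : ∀ m₀, g m₀ = if m₀ < 2 * t + 1
      then -(Real.log (1 - p₀)) / (m₀ * Real.log 2)
      else Real.log (1 - p₀) / Real.log (1 - (2 : ℝ) ^ (2 * t) / (2 : ℝ) ^ m₀)) :
    (∀ m₀, 1 ≤ m₀ → m₀ ≤ m → g m₀ ≤ g m) ∧
      g m = Real.log (1 - p₀) / Real.log (1 - (2 : ℝ) ^ (2 * t) / (2 : ℝ) ^ m) := by
  have hL : Real.log (1 - p₀) < 0 := Real.log_neg (by linarith) (by linarith)
  have hxpos : ∀ k : ℕ, (0:ℝ) < (2:ℝ)^(2*t) / (2:ℝ)^k := fun k => by positivity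
  have hxle : ∀ k : ℕ, 2*t+1 ≤ k → (2:ℝ)^(2*t) / (2:ℝ)^k ≤ 1/2 := by
    intro k hk
    rw [div_le_iff₀ (by positivity)]
    have h : (2:ℝ)^(2*t+1) ≤ (2:ℝ)^k := pow_le_pow_right₀ (by norm_num) hk
    rw [pow_succ] at h
    linarith
  have hlogneg : ∀ k : ℕ, 2*t+1 ≤ k → Real.log (1 - (2:ℝ)^(2*t)/(2:ℝ)^k) < 0 := by
    intro k hk
    exact Real.log_neg (by linarith [hxle k hk]) (by linarith [hxpos k])
  have hloglb : -Real.log 2 ≤ Real.log (1 - (2:ℝ)^(2*t)/(2:ℝ)^m) := by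
    have h1 : (1:ℝ)/2 ≤ 1 - (2:ℝ)^(2*t)/(2:ℝ)^m := by linarith [hxle m hm]
    have h2 := Real.log_le_log (by norm_num : (0:ℝ) < 1/2) h1
    rwa [show (1:ℝ)/2 = 2⁻¹ by norm_num, Real.log_inv] at h2
  have hgm : g m = Real.log (1 - p₀) / Real.log (1 - (2:ℝ)^(2*t)/(2:ℝ)^m) := by
    rw [hg m, if_neg (by omega)]
  refine ⟨?_, hgm⟩
  intro m₀ h1 h2
  rw [hgm, hg m₀]
  have hDm : 0 < -Real.log (1 - (2:ℝ)^(2*t)/(2:ℝ)^m) := by linarith [hlogneg m hm]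
  rw [show Real.log (1-p₀) / Real.log (1 - (2:ℝ)^(2*t)/(2:ℝ)^m)
      = (-Real.log (1-p₀)) / (-Real.log (1 - (2:ℝ)^(2*t)/(2:ℝ)^m)) from
      (neg_div_neg_eq _ _).symm]
  by_cases hc : m₀ < 2*t+1
  · rw [if_pos hc]
    have hm₀ : (1:ℝ) ≤ (m₀:ℝ) := by exact_mod_cast h1
    have hlog2 : 0 < Real.log 2 := Real.log_pos (by norm_num)
    have hD1 : 0 < (m₀:ℝ) * Real.log 2 := by nlinarith
    have hle : -Real.log (1 - (2:ℝ)^(2*t)/(2:ℝ)^m) ≤ (m₀:ℝ) * Real.log 2 := by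
      nlinarith
    rw [div_le_div_iff₀ hD1 hDm]
    nlinarith
  · rw [if_neg hc]
    push_neg at hc
    have hD1 : 0 < -Real.log (1 - (2:ℝ)^(2*t)/(2:ℝ)^m₀) := by linarith [hlogneg m₀ hc]
    have hxmono : (2:ℝ)^(2*t)/(2:ℝ)^m ≤ (2:ℝ)^(2*t)/(2:ℝ)^m₀ := by
      gcongr <;> first
        | norm_num
        | exact pow_le_pow_right₀ (by norm_num) h2
    have hle : Real.log (1 - (2:ℝ)^(2*t)/(2:ℝ)^m₀)
        ≤ Real.log (1 - (2:ℝ)^(2*t)/(2:ℝ)^m) :=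
      Real.log_le_log (by linarith [hxle m₀ hc]) (by linarith)
    rw [show Real.log (1-p₀) / Real.log (1 - (2:ℝ)^(2*t)/(2:ℝ)^m₀)
        = (-Real.log (1-p₀)) / (-Real.log (1 - (2:ℝ)^(2*t)/(2:ℝ)^m₀)) from
        (neg_div_neg_eq _ _).symm]
    rw [div_le_div_iff₀ hD1 hDm]
    nlinarith
end

section
/- For protocol B, the trace distance between the attacker's n-bit ciphertext state and the maximally mixed state satisfies ‖ρ_{(x₁,…,xₙ)} − 2^{−ln} I^{⊗n}‖_tr ≤ √((2ⁿ−1)/(2^l−1)); hence if 2^{l−n} grows superpolynomially (i.e., for every polynomial p, √(2^{n−l}) < 1/p(n) for large n), the protocol is information-theoretically indistinguishable. -/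
open Matrix

/-- Trace norm of a square complex matrix: the sum of its singular values. -/
noncomputable def traceNorm {d : Type*} [Fintype d] [DecidableEq d]
    (A : Matrix d d ℂ) : ℝ :=
  ∑ i, Real.sqrt ((Matrix.isHermitian_conjTranspose_mul_self A).eigenvalues i)

/-- Protocol-B single-bit cipher density operator for plaintext bit `x` and key `k`:
`ρ_{(x,k)} = 2^{−l} ∑_{i,b} (−1)^{bx} |i⟩⟨i⊕bk|`. -/
noncomputable def rhoB (l : ℕ) (x : ZMod 2) (k : Fin l → ZMod 2) :
    Matrix (Fin l → ZMod 2) (Fin l → ZMod 2) ℂ :=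
  ((2 : ℂ) ^ l)⁻¹ • ∑ i, ∑ b : ZMod 2,
    ((-1 : ℂ)) ^ ((b * x).val) • Matrix.single i (i + b • k) (1 : ℂ)

/-- Attacker's state for an `n`-bit plaintext `x`, averaged over the key
`k` uniform on `{0,1}^l \ {0}`:
`ρ_{(x₁,…,xₙ)} = (2^l−1)^{−1} ∑_{k≠0} ρ_{(x₁,k)} ⊗ ⋯ ⊗ ρ_{(xₙ,k)}`. -/
noncomputable def rhoBn (l n : ℕ) (x : Fin n → ZMod 2) :
    Matrix (Fin n → Fin l → ZMod 2) (Fin n → Fin l → ZMod 2) ℂ :=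
  ((2 : ℂ) ^ l - 1)⁻¹ • ∑ k ∈ Finset.univ.filter (fun k : Fin l → ZMod 2 => k ≠ 0),
    Matrix.of fun I J => ∏ j, rhoB l (x j) k (I j) (J j)


/-!
By Cauchy–Schwarz on the singular values, `‖A‖_tr ≤ √(D · Tr(Aᵀ A))` for a real `D × D` matrix,
so everything reduces to Hilbert–Schmidt inner products. A tensor product
`ρ_{(x₁,k)} ⊗ ⋯ ⊗ ρ_{(xₙ,k)}` has trace one, and the inner product of two of them factorises over
the `n` blocks; a single block contributes `2^{-l} (1 + [k = k'] (-1)^{x+y})`, since translation by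
a nonzero key has no fixed points. After subtracting the maximally mixed state, only the diagonal
`k = k'` of the double average over the `2^l - 1` nonzero keys survives:
`⟨ρ_x - I/D, ρ_y - I/D⟩ = (∏ⱼ (1 + (-1)^{xⱼ+yⱼ}) - 1) / ((2^l - 1) D)`.
For `x = y` the product is `2ⁿ`; in general it is nonnegative, whence
`‖ρ_x - ρ_y‖_tr ≤ √(2ⁿ⁺¹ / (2^l - 1)) ≤ 2 √(2^{n-l})`. Applying the hypothesis to `p = 1`
forces `l ≥ 1` eventually.
-/

open Finset

section TraceNorm

variable {d : Type*} [Fintype d] [DecidableEq d]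

theorem traceNorm_le_sqrt_card_mul_re_trace (A : Matrix d d ℂ) :
    traceNorm A ≤ √(Fintype.card d * RCLike.re (Aᴴ * A).trace) := by
  set hH := isHermitian_conjTranspose_mul_self A
  have hsum : RCLike.re (Aᴴ * A).trace = ∑ i, hH.eigenvalues i := by
    simp [hH.trace_eq_sum_eigenvalues]
  refine Real.le_sqrt_of_sq_le ?_
  calc traceNorm A ^ 2 ≤ (univ.card : ℝ) * ∑ i, √(hH.eigenvalues i) ^ 2 :=
        sq_sum_le_card_mul_sum_sq
    _ = Fintype.card d * RCLike.re (Aᴴ * A).trace := by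
        rw [card_univ, hsum]
        congr 1
        exact sum_congr rfl fun i _ =>
          Real.sq_sqrt (eigenvalues_conjTranspose_mul_self_nonneg A i)

theorem traceNorm_map_ofReal_le (M : Matrix d d ℝ) :
    traceNorm (M.map Complex.ofReal) ≤ √(Fintype.card d * (vec M ⬝ᵥ vec M)) := by
  convert traceNorm_le_sqrt_card_mul_re_trace (M.map Complex.ofReal) using 3
  rw [vec_dotProduct_vec]
  simp [Matrix.trace, Matrix.mul_apply]

end TraceNorm

section PiTensor

variable {ι G R : Type*} [Fintype ι] [DecidableEq ι] [Fintype G] [CommSemiring R]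

def piTensor (A : ι → Matrix G G R) : Matrix (ι → G) (ι → G) R :=
  of fun I J => ∏ j, A j (I j) (J j)

theorem trace_piTensor (A : ι → Matrix G G R) : (piTensor A).trace = ∏ j, (A j).trace := by
  simp only [Matrix.trace, Matrix.diag, piTensor, of_apply]
  exact (Fintype.prod_sum fun j a => A j a a).symm

theorem vec_piTensor_dotProduct (A B : ι → Matrix G G R) :
    vec (piTensor A) ⬝ᵥ vec (piTensor B) = ∏ j, vec (A j) ⬝ᵥ vec (B j) := by
  simp only [dotProduct, vec, piTensor, of_apply, ← prod_mul_distrib, Fintype.sum_prod_type,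
    Fintype.prod_sum]

end PiTensor

section ShiftState

variable {G : Type*} [AddGroup G] [Fintype G] [DecidableEq G]

noncomputable def shiftState (s : ℝ) (k : G) : Matrix G G ℝ :=
  of fun a b =>
    (Fintype.card G : ℝ)⁻¹ * ((if b = a then 1 else 0) + s * if b = a + k then 1 else 0)

variable {k k' : G}

theorem trace_shiftState (s : ℝ) (hk : k ≠ 0) : (shiftState s k).trace = 1 := by
  have hG : (Fintype.card G : ℝ) ≠ 0 := Nat.cast_ne_zero.mpr Fintype.card_ne_zero
  simp [Matrix.trace, shiftState, hk, hG]

theorem vec_shiftState_dotProduct (s t : ℝ) (hk : k ≠ 0) (hk' : k' ≠ 0) :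
    vec (shiftState s k) ⬝ᵥ vec (shiftState t k') =
      (Fintype.card G : ℝ)⁻¹ * (1 + if k = k' then s * t else 0) := by
  have hG : (Fintype.card G : ℝ) ≠ 0 := Nat.cast_ne_zero.mpr Fintype.card_ne_zero
  have hkk : ∀ a : G, (a = a + k) ↔ False := fun a => by simpa [eq_comm] using hk
  simp only [dotProduct, vec, shiftState, of_apply, Fintype.sum_prod_type]
  rw [sum_comm]
  split_ifs with h
  · subst h
    simp [mul_add, add_mul, ite_mul, mul_ite, sum_add_distrib, hkk, hk, hG, mul_assoc,
      mul_left_comm s]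
  · simp [mul_add, add_mul, ite_mul, mul_ite, sum_add_distrib, hkk, hk', Ne.symm h, hG]

end ShiftState

section Averaging

variable {β κ : Type*} [Fintype β] [DecidableEq β]

theorem vec_dotProduct_vec_one (M : Matrix β β ℝ) : vec M ⬝ᵥ vec 1 = M.trace := by
  rw [vec_dotProduct_vec, Matrix.mul_one, trace_transpose]

theorem vec_sub_smul_one_dotProduct {M N : Matrix β β ℝ} (hM : M.trace = 1) (hN : N.trace = 1)
    (c : ℝ) :
    vec (M - c • 1) ⬝ᵥ vec (N - c • 1) = vec M ⬝ᵥ vec N - 2 * c + c ^ 2 * Fintype.card β := by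
  have h1 : vec (1 : Matrix β β ℝ) ⬝ᵥ vec 1 = Fintype.card β := by
    rw [vec_dotProduct_vec_one, trace_one]
  simp only [vec_sub, vec_smul, sub_dotProduct, dotProduct_sub, smul_dotProduct, dotProduct_smul,
    vec_dotProduct_vec_one, dotProduct_comm (vec 1), h1, hM, hN, smul_eq_mul]
  ring

theorem vec_average_sub_dotProduct [Nonempty β] [DecidableEq κ] {K : Finset κ} (hK : K.Nonempty)
    {ρ σ : κ → Matrix β β ℝ}
    (hρ : ∀ k ∈ K, (ρ k).trace = 1) (hσ : ∀ k ∈ K, (σ k).trace = 1) (P : ℝ)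
    (hdot : ∀ k ∈ K, ∀ k' ∈ K,
      vec (ρ k) ⬝ᵥ vec (σ k') = (Fintype.card β : ℝ)⁻¹ * if k = k' then P else 1) :
    vec ((#K : ℝ)⁻¹ • ∑ k ∈ K, ρ k - (Fintype.card β : ℝ)⁻¹ • 1) ⬝ᵥ
        vec ((#K : ℝ)⁻¹ • ∑ k ∈ K, σ k - (Fintype.card β : ℝ)⁻¹ • 1) =
      (P - 1) / (#K * Fintype.card β) := by
  set D := (Fintype.card β : ℝ)
  have hD : D ≠ 0 := Nat.cast_ne_zero.mpr Fintype.card_ne_zero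
  have hKc : (#K : ℝ) ≠ 0 := Nat.cast_ne_zero.mpr hK.card_pos.ne'
  have hcentre : ∀ τ : κ → Matrix β β ℝ,
      (#K : ℝ)⁻¹ • ∑ k ∈ K, τ k - D⁻¹ • 1 = (#K : ℝ)⁻¹ • ∑ k ∈ K, (τ k - D⁻¹ • 1) := by
    intro τ
    rw [sum_sub_distrib, sum_const, smul_sub, ← Nat.cast_smul_eq_nsmul ℝ, smul_smul,
      inv_mul_cancel₀ hKc, one_smul]
  have hterm : ∀ k ∈ K, ∀ k' ∈ K, vec (ρ k - D⁻¹ • 1) ⬝ᵥ vec (σ k' - D⁻¹ • 1) =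
      if k = k' then D⁻¹ * (P - 1) else 0 := by
    intro k hk k' hk'
    rw [vec_sub_smul_one_dotProduct (hρ k hk) (hσ k' hk'), hdot k hk k' hk']
    split_ifs <;> field_simp <;> ring
  rw [hcentre, hcentre, vec_smul, vec_smul, smul_dotProduct, dotProduct_smul, vec_sum, vec_sum,
    sum_dotProduct]
  simp only [dotProduct_sum]
  rw [sum_congr rfl fun k hk => sum_congr rfl (hterm k hk)]
  simp only [sum_ite_eq, smul_eq_mul]
  rw [sum_ite_mem, inter_self, sum_const, nsmul_eq_mul]
  field_simp

end Averaging

section KeyAverage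

variable {ι G : Type*} [Fintype ι] [DecidableEq ι] [AddGroup G] [Fintype G] [DecidableEq G]

noncomputable def keyAverage (s : ι → ℝ) : Matrix (ι → G) (ι → G) ℝ :=
  (#(univ.filter fun k : G => k ≠ 0) : ℝ)⁻¹ •
    ∑ k ∈ univ.filter (fun k : G => k ≠ 0), piTensor fun j => shiftState (s j) k

theorem card_filter_ne_zero : (#(univ.filter fun k : G => k ≠ 0) : ℝ) = Fintype.card G - 1 := by
  rw [filter_ne', card_erase_of_mem (mem_univ _), card_univ, Nat.cast_sub Fintype.card_pos]
  simp

theorem vec_keyAverage_sub_dotProduct [Nontrivial G] (s t : ι → ℝ) :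
    vec (keyAverage s - (Fintype.card (ι → G) : ℝ)⁻¹ • (1 : Matrix (ι → G) (ι → G) ℝ)) ⬝ᵥ
        vec (keyAverage t - (Fintype.card (ι → G) : ℝ)⁻¹ • 1) =
      (∏ j, (1 + s j * t j) - 1) / ((Fintype.card G - 1) * Fintype.card (ι → G)) := by
  rw [← card_filter_ne_zero]
  refine vec_average_sub_dotProduct (exists_ne 0 |>.imp fun k hk => by simpa using hk)
    (fun k hk => ?_) (fun k hk => ?_) _ fun k hk k' hk' => ?_
  · rw [trace_piTensor, prod_eq_one fun j _ => trace_shiftState (s j) (mem_filter.mp hk).2]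
  · rw [trace_piTensor, prod_eq_one fun j _ => trace_shiftState (t j) (mem_filter.mp hk).2]
  · rw [vec_piTensor_dotProduct, prod_congr rfl fun j _ =>
      vec_shiftState_dotProduct (s j) (t j) (mem_filter.mp hk).2 (mem_filter.mp hk').2,
      prod_mul_distrib, prod_const, card_univ, Fintype.card_fun, Nat.cast_pow, inv_pow]
    split_ifs <;> simp

end KeyAverage

section SignVectors

variable {ι G : Type*} [Fintype ι] {s t : ι → ℝ}

theorem prod_one_add_mul_self (hs : ∀ j, |s j| = 1) :
    ∏ j, (1 + s j * s j) = 2 ^ Fintype.card ι := by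
  simp only [← abs_mul_abs_self (s _), hs, prod_const, card_univ]
  norm_num

variable [DecidableEq ι] [AddGroup G] [Fintype G] [DecidableEq G] [Nontrivial G]

theorem traceNorm_keyAverage_sub_le (hs : ∀ j, |s j| = 1) :
    traceNorm ((keyAverage s - (Fintype.card (ι → G) : ℝ)⁻¹ •
        (1 : Matrix (ι → G) (ι → G) ℝ)).map Complex.ofReal) ≤
      √((2 ^ Fintype.card ι - 1) / (Fintype.card G - 1)) := by
  refine (traceNorm_map_ofReal_le _).trans_eq ?_
  rw [vec_keyAverage_sub_dotProduct, prod_one_add_mul_self hs]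
  field_simp

theorem traceNorm_keyAverage_sub_keyAverage_le (hs : ∀ j, |s j| = 1) (ht : ∀ j, |t j| = 1) :
    traceNorm ((keyAverage s - keyAverage t : Matrix (ι → G) (ι → G) ℝ).map Complex.ofReal) ≤
      √(2 ^ (Fintype.card ι + 1) / (Fintype.card G - 1)) := by
  have hc : (0 : ℝ) < Fintype.card G - 1 := sub_pos.mpr (Nat.one_lt_cast.mpr Fintype.one_lt_card)
  have hcross : 0 ≤ ∏ j, (1 + s j * t j) := prod_nonneg fun j _ => by
    have := neg_abs_le (s j * t j)
    rw [abs_mul, hs, ht] at this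
    linarith
  rw [← sub_sub_sub_cancel_right (keyAverage s) (keyAverage t)
    ((Fintype.card (ι → G) : ℝ)⁻¹ • (1 : Matrix (ι → G) (ι → G) ℝ))]
  refine (traceNorm_map_ofReal_le _).trans (Real.sqrt_le_sqrt ?_)
  rw [vec_sub, sub_dotProduct, dotProduct_sub, dotProduct_sub,
    dotProduct_comm (vec (keyAverage t - _))]
  simp only [vec_keyAverage_sub_dotProduct, prod_one_add_mul_self hs, prod_one_add_mul_self ht]
  field_simp
  rw [pow_succ]
  linarith

end SignVectors

theorem card_keys (l : ℕ) : Fintype.card (Fin l → ZMod 2) = 2 ^ l := by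
  simp [ZMod.card]

theorem rhoB_eq_map_shiftState (l : ℕ) (x : ZMod 2) (k : Fin l → ZMod 2) :
    rhoB l x k = (shiftState ((-1) ^ x.val) k).map Complex.ofReal := by
  have sum_bit : ∀ f : ZMod 2 → Matrix (Fin l → ZMod 2) (Fin l → ZMod 2) ℂ,
      ∑ b, f b = f 0 + f 1 := Fin.sum_univ_two
  ext i j
  simp [rhoB, shiftState, sum_bit, Matrix.sum_apply, single_apply, eq_comm, ite_and,
    sum_add_distrib, apply_ite Complex.ofReal]

theorem rhoBn_eq_map_keyAverage (l n : ℕ) (x : Fin n → ZMod 2) :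
    rhoBn l n x = (keyAverage fun j => (-1) ^ (x j).val).map Complex.ofReal := by
  ext I J
  simp [rhoBn, keyAverage, piTensor, rhoB_eq_map_shiftState, Matrix.sum_apply, card_filter_ne_zero]

theorem rhoBn_sub_maximallyMixed_eq_map (l n : ℕ) (x : Fin n → ZMod 2) :
    rhoBn l n x - ((2 : ℂ) ^ (l * n))⁻¹ • (1 : Matrix _ _ ℂ) =
      (keyAverage (fun j => (-1) ^ (x j).val) -
        (Fintype.card (Fin n → Fin l → ZMod 2) : ℝ)⁻¹ • 1).map Complex.ofReal := by
  ext I J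
  simp [rhoBn_eq_map_keyAverage, Matrix.one_apply, apply_ite Complex.ofReal, pow_mul]

theorem traceNorm_rhoBn_sub_maximallyMixed_le {l : ℕ} (n : ℕ) (hl : 1 ≤ l)
    (x : Fin n → ZMod 2) :
    traceNorm (rhoBn l n x - ((2 : ℂ) ^ (l * n))⁻¹ • (1 : Matrix _ _ ℂ)) ≤
      √((2 ^ n - 1) / (2 ^ l - 1)) := by
  have : Nonempty (Fin l) := ⟨⟨0, hl⟩⟩
  rw [rhoBn_sub_maximallyMixed_eq_map]
  simpa [card_keys] using
    traceNorm_keyAverage_sub_le (G := Fin l → ZMod 2) fun j => abs_neg_one_pow (x j).val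

theorem traceNorm_rhoBn_sub_rhoBn_le {l : ℕ} (n : ℕ) (hl : 1 ≤ l) (x y : Fin n → ZMod 2) :
    traceNorm (rhoBn l n x - rhoBn l n y) ≤ √(2 ^ (n + 1) / (2 ^ l - 1)) := by
  have : Nonempty (Fin l) := ⟨⟨0, hl⟩⟩
  rw [rhoBn_eq_map_keyAverage, rhoBn_eq_map_keyAverage, ← Matrix.map_sub _ Complex.ofReal_sub]
  simpa [card_keys] using traceNorm_keyAverage_sub_keyAverage_le (G := Fin l → ZMod 2)
    (fun j => abs_neg_one_pow (x j).val) fun j => abs_neg_one_pow (y j).val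

theorem half_sqrt_le_sqrt_two_rpow_sub {l : ℕ} (n : ℕ) (hl : 1 ≤ l) :
    1 / 2 * √(2 ^ (n + 1) / (2 ^ l - 1)) ≤ √(2 ^ ((n : ℝ) - l)) := by
  have h2l : (2 : ℝ) ≤ 2 ^ l := le_self_pow₀ one_le_two (by omega)
  have hc : (0 : ℝ) < 2 ^ l - 1 := by linarith
  rw [Real.rpow_sub two_pos, Real.rpow_natCast, Real.rpow_natCast,
    Real.le_sqrt (by positivity) (by positivity), mul_pow, Real.sq_sqrt (by positivity),
    ← le_div_iff₀' (by norm_num), div_div, div_le_div_iff₀ hc (by positivity), pow_succ]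
  nlinarith [pow_pos (two_pos : (0 : ℝ) < 2) n]

theorem one_le_of_sqrt_two_rpow_sub_lt_one {n m : ℕ} (h : √(2 ^ ((n : ℝ) - m)) < 1) : 1 ≤ m := by
  by_contra! hm
  rw [Nat.lt_one_iff.mp hm, Nat.cast_zero, sub_zero, Real.rpow_natCast] at h
  exact h.not_ge (Real.one_le_sqrt.mpr (one_le_pow₀ one_le_two))

/-- `‖ρ_{(x₁,…,xₙ)} − 2^{−ln} I‖_tr ≤ √((2ⁿ−1)/(2^l−1))`; hence if
`√(2^{n−l})` is eventually smaller than any inverse positive polynomial, the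
trace distance between the cipher states of any two plaintexts is too, i.e. the
protocol is information-theoretically indistinguishable. -/
theorem stmt15 :
    (∀ (l n : ℕ), 1 ≤ l → ∀ x : Fin n → ZMod 2,
      traceNorm (rhoBn l n x - ((2 : ℂ) ^ (l * n))⁻¹ • (1 : Matrix _ _ ℂ))
        ≤ Real.sqrt (((2 : ℝ) ^ n - 1) / ((2 : ℝ) ^ l - 1))) ∧
    (∀ l : ℕ → ℕ,
      (∀ p : Polynomial ℝ, (∀ m : ℕ, 0 < p.eval (m : ℝ)) →
        ∀ᶠ n : ℕ in Filter.atTop,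
          Real.sqrt ((2 : ℝ) ^ ((n : ℝ) - (l n : ℝ))) < 1 / p.eval (n : ℝ)) →
      ∀ p : Polynomial ℝ, (∀ m : ℕ, 0 < p.eval (m : ℝ)) →
        ∀ᶠ n : ℕ in Filter.atTop, ∀ x y : Fin n → ZMod 2,
          (1 / 2 : ℝ) * traceNorm (rhoBn (l n) n x - rhoBn (l n) n y)
            < 1 / p.eval (n : ℝ)) := by
  refine ⟨fun l n hl x => traceNorm_rhoBn_sub_maximallyMixed_le n hl x, fun l hsmall p hp => ?_⟩
  filter_upwards [hsmall 1 fun _ => by simp, hsmall p hp] with n hn1 hnp x y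
  have hl : 1 ≤ l n := one_le_of_sqrt_two_rpow_sub_lt_one (by simpa using hn1)
  calc 1 / 2 * traceNorm (rhoBn (l n) n x - rhoBn (l n) n y)
      ≤ 1 / 2 * √(2 ^ (n + 1) / (2 ^ l n - 1)) := by
        gcongr
        exact traceNorm_rhoBn_sub_rhoBn_le n hl x y
    _ ≤ √(2 ^ ((n : ℝ) - l n)) := half_sqrt_le_sqrt_two_rpow_sub n hl
    _ < 1 / p.eval (n : ℝ) := hnp
end
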